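/- arXiv:1705.05673 — 4 statements merged into one kernel-verified Lean document; each statement's English description precedes it below -/
import Mathlib

section
/- For any integers $n \geq 2$ and $r \geq 1$ with $n \geq 2r+1$, the $(r+1-i)\times(r+1-i)$ Vandermonde-type determinant $\det\left( \binom{t_l}{k} \right)$, with $t = (n-r, n-r+2, n-r+3, \dots, n+1-i)$ (i.e., $t_1 = n-r$ and $t_l = n-r+l$ for $l \geq 2$) and $0 \leq k \leq r-i$, equals $r+1-i$ in absolute value, for every $0 \leq i \leq r$. -/
/-!
Since the descending Pochhammer polynomial `descPochhammer R k` is monic of degree `k` and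
evaluates at a natural number `t` to `k! * C(t, k)`, the determinant of `(C(t_l, k))` times `0! 1! ⋯ (m-1)!` is the Vandermonde determinant
of the nodes `t_l`. For the nodes `a, a+2, a+3, …, a+m` the Vandermonde determinant is
`(2 ⋯ m) · 0! 1! ⋯ (m-2)!`: the first node contributes the differences `2, …, m`, and the
remaining consecutive nodes contribute the Vandermonde determinant of `0, …, m-2`. Comparing the
two products leaves `m`.
-/

open Finset
open scoped Nat

namespace Matrix

variable {R : Type*} [CommRing R]

theorem det_of_choose_mul_prod_factorial [IsDomain R] {m : ℕ} (v : Fin m → ℕ) :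
    (of fun i j : Fin m => (Nat.choose (v i) j : R)).det * ∏ j : Fin m, ((j : ℕ)! : R) =
      (vandermonde fun i => (v i : R)).det := by
  rw [det_eval_matrixOfPolynomials_eq_det_vandermonde _ (fun j => descPochhammer R j)
    (fun j => descPochhammer_natDegree R j) (fun j => monic_descPochhammer R j), mul_comm,
    ← det_mul_row]
  congr 1
  ext i j
  simp only [of_apply, descPochhammer_eval_eq_descFactorial,
    Nat.descFactorial_eq_factorial_mul_choose, Nat.cast_mul]

theorem det_vandermonde_cons {n : ℕ} (x : R) (w : Fin n → R) :
    (vandermonde (Fin.cons x w : Fin (n + 1) → R)).det =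
      (∏ j, (w j - x)) * (vandermonde w).det := by
  simp only [det_vandermonde, Fin.prod_univ_succ, Fin.prod_Ioi_zero, Fin.prod_Ioi_succ,
    Fin.cons_zero, Fin.cons_succ]

theorem det_vandermonde_id_eq_prod_factorial (n : ℕ) :
    (vandermonde fun i : Fin n => (i : R)).det = ∏ i : Fin n, ((i : ℕ)! : R) := by
  cases n with
  | zero => simp
  | succ n =>
    rw [det_vandermonde_id_eq_superFactorial, ← Nat.prod_range_succ_factorial,
      Fin.prod_univ_eq_prod_range (fun i => ((i)! : R)), Nat.cast_prod]

end Matrix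

open Matrix

def gapNodes (a s : ℕ) : Fin (s + 1) → ℕ :=
  Fin.cons a fun j => a + j + 2

theorem det_vandermonde_gapNodes {R : Type*} [CommRing R] (a s : ℕ) :
    (vandermonde fun i => (gapNodes a s i : R)).det =
      ((s + 1)! : R) * ∏ j : Fin s, ((j : ℕ)! : R) := by
  have hcons : (fun i => (gapNodes a s i : R)) = Fin.cons (a : R) fun j => (j : R) + (a + 2) := by
    ext i
    cases i using Fin.cases <;> simp [gapNodes, add_assoc, add_left_comm]
  rw [hcons, det_vandermonde_cons, det_vandermonde_add, det_vandermonde_id_eq_prod_factorial]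
  congr 1
  rw [← prod_range_add_one_eq_factorial, prod_range_succ', Fin.prod_univ_eq_prod_range
    (fun j => (j : R) + (a + 2) - a)]
  push_cast
  rw [mul_one]
  exact prod_congr rfl fun j _ => by ring

theorem det_choose_gapNodes {R : Type*} [CommRing R] [IsDomain R] [CharZero R] (a s : ℕ) :
    (of fun i j : Fin (s + 1) => (Nat.choose (gapNodes a s i) j : R)).det = s + 1 := by
  have key := det_of_choose_mul_prod_factorial (R := R) (gapNodes a s)
  rw [det_vandermonde_gapNodes, Fin.prod_univ_castSucc, Nat.factorial_succ] at key
  simp only [Fin.val_castSucc, Fin.val_last, Nat.cast_mul] at key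
  have hne : ((s ! : R) * ∏ j : Fin s, ((j : ℕ)! : R)) ≠ 0 := by
    refine mul_ne_zero (by exact_mod_cast s.factorial_ne_zero) (prod_ne_zero_iff.mpr ?_)
    exact fun j _ => by exact_mod_cast j.val.factorial_ne_zero
  apply mul_right_cancel₀ hne
  push_cast at key ⊢
  linear_combination key

theorem schubert_multiplicity_det_general (n r i : ℕ) (hi : i ≤ r) :
    |Matrix.det (Matrix.of fun k l : Fin (r + 1 - i) =>
      ((Nat.choose (if (l : ℕ) = 0 then n - r else n - r + (l : ℕ) + 1) (k : ℕ) : ℕ) : ℚ))|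
      = ((r + 1 - i : ℕ) : ℚ) := by
  obtain ⟨s, hs⟩ : ∃ s, r + 1 - i = s + 1 := ⟨r - i, by omega⟩
  rw [hs]
  have hM : (of fun k l : Fin (s + 1) =>
      ((Nat.choose (if (l : ℕ) = 0 then n - r else n - r + (l : ℕ) + 1) (k : ℕ) : ℕ) : ℚ)) =
      (of fun l k : Fin (s + 1) => (Nat.choose (gapNodes (n - r) s l) k : ℚ))ᵀ := by
    ext k l
    cases l using Fin.cases <;> simp [gapNodes, add_assoc]
  rw [hM, det_transpose, det_choose_gapNodes]
  norm_cast

/-- For integers `n ≥ 2`, `r ≥ 1` with `n ≥ 2r+1` and `0 ≤ i ≤ r`,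
the `(r+1-i) × (r+1-i)` Vandermonde-type determinant `det (C(t_l, k))`, with
`t = (n-r, n-r+2, n-r+3, …, n+1-i)` (that is, `t_1 = n-r` and `t_l = n-r+l` for
`l ≥ 2`) and `0 ≤ k ≤ r-i`, equals `r+1-i` in absolute value. -/
theorem schubert_multiplicity_det (n r i : ℕ) (hn : 2 ≤ n) (hr : 1 ≤ r)
    (h : 2 * r + 1 ≤ n) (hi : i ≤ r) :
    |Matrix.det (Matrix.of fun k l : Fin (r + 1 - i) =>
      ((Nat.choose (if (l : ℕ) = 0 then n - r else n - r + (l : ℕ) + 1) (k : ℕ) : ℕ) : ℚ))|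
      = ((r + 1 - i : ℕ) : ℚ) :=
  schubert_multiplicity_det_general n r i hi
end

section
/- Let $r \geq 4$ and $n \geq 2r+1$ be integers. Define $a = \lfloor r/2 \rfloor \cdot \lfloor (n+1)/(r+1) \rfloor$ and $b = \lfloor (n-r)/3 \rfloor$. Then $a > b$. -/
/-! Write `q = ⌊(n+1)/(r+1)⌋`. Since `n + 1 < (r+1)(q+1)`, we get `n - r < (r+1) q`, and for
`r ≥ 4` the factor `r + 1` is at most `3 ⌊r/2⌋`; dividing by `3` gives the claim. -/

theorem Nat.sub_lt_mul_div {k m : ℕ} (hk : 0 < k) (hkm : k ≤ m) : m - k < k * (m / k) := by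
  rw [Nat.sub_lt_iff_lt_add hkm, ← Nat.mul_add_one]
  exact Nat.lt_mul_div_succ m hk

theorem Nat.succ_le_three_mul_div_two {r : ℕ} (hr : 4 ≤ r) : r + 1 ≤ 3 * (r / 2) := by
  omega

/-- For integers `r ≥ 4` and `n ≥ 2r+1`, one has
`⌊r/2⌋ · ⌊(n+1)/(r+1)⌋ > ⌊(n-r)/3⌋`. -/
theorem improves_AOP_bound (r n : ℕ) (hr : 4 ≤ r) (hn : 2 * r + 1 ≤ n) :
    (n - r) / 3 < (r / 2) * ((n + 1) / (r + 1)) := by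
  rw [Nat.div_lt_iff_lt_mul three_pos]
  calc n - r = (n + 1) - (r + 1) := (Nat.add_sub_add_right n 1 r).symm
    _ < (r + 1) * ((n + 1) / (r + 1)) := Nat.sub_lt_mul_div r.succ_pos (by omega)
    _ ≤ 3 * (r / 2) * ((n + 1) / (r + 1)) :=
        Nat.mul_le_mul_right _ (Nat.succ_le_three_mul_div_two hr)
    _ = r / 2 * ((n + 1) / (r + 1)) * 3 := by ring
end

section
/- For the tangent developable $Y_n \subseteq \mathbb{P}^n$ of the degree-$n$ rational normal curve, parametrized affinely by $\phi(t,u) = (t + u, t^2 + 2tu, \dots, t^n + n t^{n-1} u)$, one has the differential relations: $\partial^m \phi / (\partial t^{m-k} \partial u^k) = 0$ for all $k \geq 2$, and $\frac{\partial^m \phi}{\partial t^m} - \frac{\partial^m \phi}{\partial t^{m-1} \partial u} = u \cdot \frac{\partial^{m+1}\phi}{\partial t^m \partial u}$ for all $1 \leq m \leq n$. Consequently, for general $p \in Y_n$ and $1 \leq m \leq n-1$, the $m$-osculating space satisfies $\dim T^m_p Y_n = \min\{m+1, n\}$. -/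
/-!
The map `φ` is the tangent surface `γ(t) + u γ'(t)` of the rational normal curve
`γ(t) = (t, t², …, tⁿ)`. Hence `∂_u φ = γ'`, `∂_u² φ = 0` and `∂_tᵃ φ = γ⁽ᵃ⁾ + u γ⁽ᵃ⁺¹⁾`, which
gives both identities. At a point with `u ≠ 0` the derivatives of order between `1` and `m`
therefore span the same space as `γ', …, γ⁽ᵐ⁺¹⁾`, and these are linearly independent since the
first nonzero coordinate of `γ⁽ᵃ⁺¹⁾` is the `a`-th one.
-/

open MvPolynomial

/-- The affine parametrization `φ(t,u) = (t+u, t²+2tu, …, tⁿ + n tⁿ⁻¹ u)` of the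
tangent developable of the degree-`n` rational normal curve: coordinate `j`
(for `j = 0,…,n-1`, representing the `(j+1)`-st coordinate) is the polynomial
`t^(j+1) + (j+1) t^j u` in the variables `t = X 0`, `u = X 1`. -/
noncomputable def tanDev (n : ℕ) (j : Fin n) : MvPolynomial (Fin 2) ℚ :=
  X 0 ^ ((j : ℕ) + 1) + C (((j : ℕ) + 1 : ℕ) : ℚ) * X 0 ^ (j : ℕ) * X 1

/-- The mixed partial derivative `∂ᵃ_t ∂ᵇ_u` of the `j`-th coordinate of `φ`. -/
noncomputable def tanDevDeriv (n : ℕ) (a b : ℕ) (j : Fin n) : MvPolynomial (Fin 2) ℚ :=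
  (fun P => pderiv (0 : Fin 2) P)^[a] ((fun P => pderiv (1 : Fin 2) P)^[b] (tanDev n j))

namespace MvPolynomial

variable {R σ : Type*}

theorem iterate_pderiv_X_pow [CommSemiring R] (i : σ) (a k : ℕ) :
    (fun P => pderiv i P)^[a] (X i ^ k : MvPolynomial σ R)
      = (k.descFactorial a : MvPolynomial σ R) * X i ^ (k - a) := by
  induction a with
  | zero => simp
  | succ a ih =>
    rw [Function.iterate_succ_apply', ih, Derivation.leibniz, pderiv_pow, pderiv_X_self,
      Derivation.map_natCast, smul_zero, add_zero, smul_eq_mul, Nat.descFactorial_succ,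
      Nat.sub_sub, Nat.add_comm a 1]
    push_cast
    ring

theorem iterate_pderiv_mul_X_of_ne [CommSemiring R] {i k : σ} (hik : i ≠ k) (a : ℕ)
    (P : MvPolynomial σ R) :
    (fun P => pderiv i P)^[a] (P * X k) = (fun P => pderiv i P)^[a] P * X k := by
  induction a with
  | zero => rfl
  | succ a ih =>
    rw [Function.iterate_succ_apply', ih, pderiv_mul, pderiv_X_of_ne hik.symm, mul_zero,
      add_zero, Function.iterate_succ_apply']

theorem pderiv_pderiv_comm [CommRing R] (i k : σ) (P : MvPolynomial σ R) :
    pderiv i (pderiv k P) = pderiv k (pderiv i P) := by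
  classical
  have h : ⁅pderiv i, pderiv k⁆ = (0 : Derivation R (MvPolynomial σ R) (MvPolynomial σ R)) :=
    derivation_ext fun l => by
      rw [Derivation.commutator_apply, pderiv_X, pderiv_X]
      simp [Pi.single_apply, apply_ite]
  simpa [Derivation.commutator_apply, sub_eq_zero] using congr($h P)

noncomputable def tangentSurface [CommSemiring R] (i k : σ) (γ : MvPolynomial σ R) :
    MvPolynomial σ R :=
  γ + pderiv i γ * X k

section TangentSurface

variable [CommRing R] {i k : σ} {γ : MvPolynomial σ R}

theorem pderiv_tangentSurface (hγ : pderiv k γ = 0) :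
    pderiv k (tangentSurface i k γ) = pderiv i γ := by
  rw [tangentSurface, map_add, pderiv_mul, pderiv_pderiv_comm, hγ, pderiv_X_self, map_zero]
  ring

theorem iterate_pderiv_tangentSurface_of_two_le (hγ : pderiv k γ = 0) {b : ℕ} (hb : 2 ≤ b) :
    (fun P => pderiv k P)^[b] (tangentSurface i k γ) = 0 := by
  obtain ⟨b, rfl⟩ := Nat.exists_eq_add_of_le' hb
  rw [Function.iterate_add_apply, Function.iterate_succ_apply, Function.iterate_one,
    pderiv_tangentSurface hγ, pderiv_pderiv_comm, hγ, map_zero,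
    Function.iterate_fixed (map_zero _)]

theorem iterate_pderiv_tangentSurface (hik : i ≠ k) (a : ℕ) :
    (fun P => pderiv i P)^[a] (tangentSurface i k γ)
      = (fun P => pderiv i P)^[a] γ + (fun P => pderiv i P)^[a + 1] γ * X k := by
  rw [tangentSurface, iterate_map_add, iterate_pderiv_mul_X_of_ne hik,
    Function.iterate_succ_apply]

theorem iterate_pderiv_tangentSurface_sub (hik : i ≠ k) (hγ : pderiv k γ = 0) {m : ℕ}
    (hm : 1 ≤ m) :
    (fun P => pderiv i P)^[m] (tangentSurface i k γ)
        - (fun P => pderiv i P)^[m - 1] (pderiv k (tangentSurface i k γ))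
      = X k * (fun P => pderiv i P)^[m] (pderiv k (tangentSurface i k γ)) := by
  obtain ⟨m, rfl⟩ := Nat.exists_eq_add_of_le' hm
  rw [iterate_pderiv_tangentSurface hik, pderiv_tangentSurface hγ, Nat.add_sub_cancel,
    ← Function.iterate_succ_apply, ← Function.iterate_succ_apply]
  ring

end TangentSurface

end MvPolynomial

theorem Matrix.linearIndependent_of_forall_lt_eq_zero {R : Type*} [CommRing R] [IsDomain R]
    {m n : ℕ} (h : m ≤ n) (v : Fin m → Fin n → R)
    (hlt : ∀ a j : Fin m, j < a → v a (Fin.castLE h j) = 0)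
    (hdiag : ∀ a, v a (Fin.castLE h a) ≠ 0) : LinearIndependent R v := by
  let M : Matrix (Fin m) (Fin m) R := Matrix.of fun a j => v a (Fin.castLE h j)
  have hM : M.det ≠ 0 := by
    rw [Matrix.det_of_isUpperTriangular (M := M) fun a j => hlt a j]
    exact Finset.prod_ne_zero_iff.mpr fun a _ => hdiag a
  exact .of_comp (LinearMap.funLeft R R (Fin.castLE h))
    (Matrix.linearIndependent_rows_of_det_ne_zero hM)

theorem span_partials_eq_span_range {K V : Type*} [Field K] [AddCommGroup V] [Module K V]
    (F : ℕ → ℕ → V) {u : K} (hu : u ≠ 0)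
    (hF0 : ∀ a, 1 ≤ a → F a 0 = F (a - 1) 1 + u • F a 1) (hF2 : ∀ a b, 2 ≤ b → F a b = 0)
    {m : ℕ} (hm : 1 ≤ m) :
    Submodule.span K {v | ∃ a b : ℕ, 1 ≤ a + b ∧ a + b ≤ m ∧ v = F a b}
      = Submodule.span K (Set.range fun a : Fin (m + 1) => F a 1) := by
  apply le_antisymm <;> rw [Submodule.span_le]
  · have hmem : ∀ a ≤ m, F a 1 ∈ Submodule.span K (Set.range fun a : Fin (m + 1) => F a 1) :=
      fun a ha => Submodule.subset_span ⟨⟨a, by omega⟩, rfl⟩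
    rintro v ⟨a, b, h1, h2, rfl⟩
    rcases b with _ | _ | b
    · rw [hF0 a (by omega)]
      exact add_mem (hmem _ (by omega)) (Submodule.smul_mem _ u (hmem a (by omega)))
    · exact hmem a (by omega)
    · rw [hF2 a _ (by omega)]
      exact zero_mem _
  · rintro _ ⟨⟨a, ha⟩, rfl⟩
    dsimp only
    have hmem : ∀ a b, 1 ≤ a + b → a + b ≤ m → F a b ∈ Submodule.span K
        {v | ∃ a b : ℕ, 1 ≤ a + b ∧ a + b ≤ m ∧ v = F a b} :=
      fun a b h1 h2 => Submodule.subset_span ⟨a, b, h1, h2, rfl⟩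
    obtain ha | rfl : a < m ∨ a = m := by omega
    · exact hmem a 1 (by omega) (by omega)
    · have hFm : F a 1 = u⁻¹ • (F a 0 - F (a - 1) 1) := by
        rw [hF0 a hm, add_sub_cancel_left, inv_smul_smul₀ hu]
      rw [hFm]
      exact Submodule.smul_mem _ _
        (sub_mem (hmem a 0 (by omega) le_rfl) (hmem (a - 1) 1 (by omega) (by omega)))

theorem tanDev_eq_tangentSurface (n : ℕ) (j : Fin n) :
    tanDev n j = tangentSurface 0 1 (X 0 ^ ((j : ℕ) + 1)) := by
  rw [tanDev, tangentSurface, pderiv_pow, pderiv_X_self, Nat.add_sub_cancel, map_natCast]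
  ring

theorem pderiv_one_X_zero_pow (k : ℕ) :
    pderiv (1 : Fin 2) (X 0 ^ k : MvPolynomial (Fin 2) ℚ) = 0 := by
  simp

theorem tanDevDeriv_eq_zero_of_two_le {n a b : ℕ} (j : Fin n) (hb : 2 ≤ b) :
    tanDevDeriv n a b j = 0 := by
  rw [tanDevDeriv, tanDev_eq_tangentSurface,
    iterate_pderiv_tangentSurface_of_two_le (pderiv_one_X_zero_pow _) hb, iterate_map_zero]

theorem tanDevDeriv_sub_tanDevDeriv {n m : ℕ} (j : Fin n) (hm : 1 ≤ m) :
    tanDevDeriv n m 0 j - tanDevDeriv n (m - 1) 1 j = X 1 * tanDevDeriv n m 1 j := by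
  simp only [tanDevDeriv, Function.iterate_zero_apply, Function.iterate_one,
    tanDev_eq_tangentSurface]
  exact iterate_pderiv_tangentSurface_sub (by decide) (pderiv_one_X_zero_pow _) hm

theorem eval_tanDevDeriv_one (n a : ℕ) (j : Fin n) (p : Fin 2 → ℚ) :
    eval p (tanDevDeriv n a 1 j)
      = ((j : ℕ) + 1).descFactorial (a + 1) * p 0 ^ ((j : ℕ) - a) := by
  rw [tanDevDeriv, Function.iterate_one, tanDev_eq_tangentSurface,
    pderiv_tangentSurface (pderiv_one_X_zero_pow _), ← Function.iterate_succ_apply,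
    iterate_pderiv_X_pow]
  simp

theorem eval_tanDevDeriv_zero {n a : ℕ} (p : Fin 2 → ℚ) (ha : 1 ≤ a) :
    (fun j => eval p (tanDevDeriv n a 0 j))
      = (fun j => eval p (tanDevDeriv n (a - 1) 1 j))
        + p 1 • fun j => eval p (tanDevDeriv n a 1 j) := by
  funext j
  have h := congrArg (eval p) (tanDevDeriv_sub_tanDevDeriv j ha)
  simp only [map_sub, map_mul, eval_X] at h
  simp only [Pi.add_apply, Pi.smul_apply, smul_eq_mul]
  linear_combination h

theorem linearIndependent_eval_tanDevDeriv_one {n m : ℕ} (h : m ≤ n) (p : Fin 2 → ℚ) :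
    LinearIndependent ℚ fun a : Fin m => fun j => eval p (tanDevDeriv n a 1 j) := by
  refine Matrix.linearIndependent_of_forall_lt_eq_zero h _ (fun a j hja => ?_) (fun a => ?_)
  · rw [eval_tanDevDeriv_one, Fin.val_castLE,
      Nat.descFactorial_eq_zero_iff_lt.mpr (Nat.succ_lt_succ hja), Nat.cast_zero, zero_mul]
  · simp [eval_tanDevDeriv_one]

theorem tangent_developable_osculating_general (n : ℕ) :
    (∀ (j : Fin n) (a b : ℕ), 2 ≤ b → tanDevDeriv n a b j = 0) ∧
    (∀ (j : Fin n) (m : ℕ), 1 ≤ m → m ≤ n →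
      tanDevDeriv n m 0 j - tanDevDeriv n (m - 1) 1 j
        = X 1 * tanDevDeriv n m 1 j) ∧
    (∀ (m : ℕ) (t u : ℚ), 1 ≤ m → m ≤ n - 1 → u ≠ 0 →
      Module.finrank ℚ ↥(Submodule.span ℚ
        {v : Fin n → ℚ | ∃ a b : ℕ, 1 ≤ a + b ∧ a + b ≤ m ∧
          v = fun j => eval (fun i : Fin 2 => if i = 0 then t else u)
            (tanDevDeriv n a b j)}) = min (m + 1) n) := by
  refine ⟨fun j a b hb => tanDevDeriv_eq_zero_of_two_le j hb,
    fun j m hm _ => tanDevDeriv_sub_tanDevDeriv j hm, fun m t u hm hmn hu => ?_⟩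
  set p : Fin 2 → ℚ := fun i => if i = 0 then t else u
  have hpu : p 1 = u := rfl
  rw [span_partials_eq_span_range (fun a b j => eval p (tanDevDeriv n a b j)) hu
      (fun a ha => hpu ▸ eval_tanDevDeriv_zero p ha)
      (fun a b hb => funext fun j => by simp [tanDevDeriv_eq_zero_of_two_le j hb]) hm,
    finrank_span_eq_card (linearIndependent_eval_tanDevDeriv_one (by omega) p),
    Fintype.card_fin, min_eq_left (by omega)]

/-- For the tangent developable `Y_n ⊆ ℙⁿ` of the degree-`n`
rational normal curve, parametrized by `φ(t,u) = (t+u, t²+2tu, …, tⁿ+ntⁿ⁻¹u)`: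
(1) all partial derivatives involving `∂_u` at least twice vanish;
(2) `∂ᵐ_t φ - ∂ᵐ⁻¹_t ∂_u φ = u · ∂ᵐ_t ∂_u φ` for `1 ≤ m ≤ n`;
(3) consequently, at a general point (here: any `(t,u)` with `u ≠ 0`) and for
`1 ≤ m ≤ n-1`, the span of the partial derivatives of order between `1` and `m`
has dimension `min (m+1) n`, i.e. `dim T^m_p Y_n = min {m+1, n}`. -/
theorem tangent_developable_osculating (n : ℕ) (hn : 1 ≤ n) :
    (∀ (j : Fin n) (a b : ℕ), 2 ≤ b → tanDevDeriv n a b j = 0) ∧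
    (∀ (j : Fin n) (m : ℕ), 1 ≤ m → m ≤ n →
      tanDevDeriv n m 0 j - tanDevDeriv n (m - 1) 1 j
        = X 1 * tanDevDeriv n m 1 j) ∧
    (∀ (m : ℕ) (t u : ℚ), 1 ≤ m → m ≤ n - 1 → u ≠ 0 →
      Module.finrank ℚ ↥(Submodule.span ℚ
        {v : Fin n → ℚ | ∃ a b : ℕ, 1 ≤ a + b ∧ a + b ≤ m ∧
          v = fun j => eval (fun i : Fin 2 => if i = 0 then t else u)
            (tanDevDeriv n a b j)}) = min (m + 1) n) :=
  tangent_developable_osculating_general n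
end

section
/- In the Grassmannian $\mathbb{G}(r,n)$ with $n \geq 2r+1$, any two points can be connected by a rational normal curve of degree $r+1$ contained in $\mathbb{G}(r,n)$. Concretely in coordinates: the map $\gamma : \mathbb{P}^1 \to \mathbb{G}(r,n)$, $\gamma([t:s]) = [(se_0 + te_{r+1}) \wedge (se_1 + te_{r+2}) \wedge \dots \wedge (se_r + te_{2r+1})]$, is a morphism whose image under the Plücker embedding is a rational normal curve of degree $r+1$ joining the points $[e_0 \wedge \dots \wedge e_r]$ (at $t=0$) and $[e_{r+1} \wedge \dots \wedge e_{2r+1}]$ (at $s=0$); its Plücker coordinates are, up to sign, the monomials $s^{r+1-j} t^j$ for $j = 0, \dots, r+1$, each possibly appearing with multiplicity, spanning a linear space of dimension $r+1$ in which the image is nondegenerate of degree $r+1$. -/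
/-!
Expanding the product by multilinearity gives `γ t s = ∑_J s^(r+1-|J|) t^|J| • w_J`, where `w_J`
is the wedge of the `e_j` with `e_j` replaced by `e_(j+r+1)` for `j ∈ J`. The index sets of the
`w_J` are pairwise distinct, so up to sign they are distinct Plücker basis vectors and hence
linearly independent. Grouping by `k = |J|` gives independent vectors `W_k` with
`γ t s = ∑_k s^(r+1-k) t^k • W_k`: the curve is the image of the rational normal curve in
`ℂ^(r+2)` under an injective linear map. That curve spans `ℂ^(r+2)` (its points with `s = 1`
and distinct `t` are the rows of an invertible Vandermonde matrix), so the span of `γ` has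
dimension `r + 2`.
-/

open Function Finset ExteriorAlgebra

theorem List.prod_map_range_smul_add_smul {R A : Type*} [CommSemiring R] [Semiring A]
    [Algebra R A] (x y : ℕ → A) (s t : R) (m : ℕ) :
    ((List.range m).map fun j => s • x j + t • y j).prod =
      ∑ J ∈ (Finset.range m).powerset, (s ^ (m - #J) * t ^ #J) •
        ((List.range m).map fun j => if j ∈ J then y j else x j).prod := by
  induction m with
  | zero => simp
  | succ m ih =>
    have hm : m ∉ Finset.range m := Finset.notMem_range_self
    rw [List.prod_range_succ, ih, sum_mul, range_add_one, sum_powerset_insert hm,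
      ← sum_add_distrib]
    refine sum_congr rfl fun J hJ => ?_
    have hJm : m ∉ J := fun h => hm (mem_powerset.1 hJ h)
    have hcard : #J ≤ m := (card_le_card (mem_powerset.1 hJ)).trans_eq (card_range m)
    have prod_insert : ((List.range m).map fun j => if j ∈ insert m J then y j else x j).prod =
        ((List.range m).map fun j => if j ∈ J then y j else x j).prod := by
      refine congrArg _ (List.map_congr_left fun j hj => ?_)
      simp only [Finset.mem_insert, or_iff_right (List.mem_range.1 hj).ne]
    rw [List.prod_range_succ, List.prod_range_succ, prod_insert, if_neg hJm,
      if_pos (Finset.mem_insert_self m J), card_insert_of_notMem hJm, mul_add, smul_mul_assoc,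
      smul_mul_assoc, mul_smul_comm, mul_smul_comm, smul_smul, smul_smul,
      Nat.sub_add_comm hcard, Nat.add_sub_add_right, pow_succ, pow_succ]
    congr 2 <;> ring

theorem Finset.sum_smul_sum_fiberwise {R M ι κ : Type*} [Semiring R] [AddCommMonoid M]
    [Module R M] [Fintype κ] [DecidableEq κ] (s : Finset ι) (g : ι → κ) (c : κ → R)
    (v : ι → M) :
    ∑ k, c k • ∑ i ∈ s with g i = k, v i = ∑ i ∈ s, c (g i) • v i := by
  rw [← sum_fiberwise s g]
  refine sum_congr rfl fun k _ => ?_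
  rw [smul_sum]
  exact sum_congr rfl fun i hi => by rw [(mem_filter.1 hi).2]

theorem LinearIndepOn.linearIndependent_sum_fiberwise {R M ι κ : Type*} [Ring R]
    [AddCommGroup M] [Module R M] [Fintype κ] [DecidableEq κ] {v : ι → M} {s : Finset ι}
    (hv : LinearIndepOn R v s) (g : ι → κ) (hg : ∀ k, ∃ i ∈ s, g i = k) :
    LinearIndependent R fun k => ∑ i ∈ s with g i = k, v i := by
  rw [Fintype.linearIndependent_iff]
  intro c hc k
  obtain ⟨i, hi, rfl⟩ := hg k
  refine linearIndepOn_finset_iff.1 hv (c ∘ g) ?_ i hi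
  rw [← hc, sum_smul_sum_fiberwise]
  rfl

theorem span_moment_curve_eq_top {K : Type*} [Field K] [Infinite K] (m : ℕ) :
    Submodule.span K
        {c | ∃ t s : K, c = fun k : Fin (m + 1) => s ^ (m - (k : ℕ)) * t ^ (k : ℕ)} = ⊤ := by
  let x : Fin (m + 1) → K := Infinite.natEmbedding K ∘ Fin.val
  have hrows : LinearIndependent K (Matrix.vandermonde x).row := by
    rw [Matrix.linearIndependent_rows_iff_isUnit, Matrix.isUnit_iff_isUnit_det,
      isUnit_iff_ne_zero, Matrix.det_vandermonde_ne_zero_iff]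
    exact (Infinite.natEmbedding K).injective.comp Fin.val_injective
  refine top_le_iff.1 ((hrows.span_eq_top_of_card_eq_finrank (by simp)).ge.trans
    (Submodule.span_mono ?_))
  rintro _ ⟨i, rfl⟩
  exact ⟨x i, 1, by funext k; simp [Matrix.vandermonde]⟩

theorem finrank_span_moment_curve {K V : Type*} [Field K] [Infinite K] [AddCommMonoid V]
    [Module K V] {m : ℕ} {W : Fin (m + 1) → V} (hW : LinearIndependent K W) :
    Module.finrank K (Submodule.span K
      {x | ∃ t s : K, x = ∑ k : Fin (m + 1), (s ^ (m - (k : ℕ)) * t ^ (k : ℕ)) • W k}) =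
      m + 1 := by
  let L := Fintype.linearCombination K W
  have hcurve :
      {x | ∃ t s : K, x = ∑ k : Fin (m + 1), (s ^ (m - (k : ℕ)) * t ^ (k : ℕ)) • W k} =
        L '' {c | ∃ t s : K, c = fun k : Fin (m + 1) => s ^ (m - (k : ℕ)) * t ^ (k : ℕ)} := by
    ext x
    simp [L, Fintype.linearCombination_apply, eq_comm]
  rw [hcurve, Submodule.span_image, span_moment_curve_eq_top, Submodule.map_top,
    Fintype.range_linearCombination, finrank_span_eq_card hW, Fintype.card_fin]

theorem ExteriorAlgebra.list_prod_map_range_ι_eq_ιMulti {R M : Type*} [CommRing R]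
    [AddCommGroup M] [Module R M] (v : ℕ → M) (n : ℕ) :
    ((List.range n).map fun j => ι R (v j)).prod = ιMulti R n (v ∘ Fin.val) := by
  rw [ιMulti_apply, ← List.map_coe_finRange_eq_range, List.map_map, List.ofFn_eq_map]
  rfl

theorem ExteriorAlgebra.exists_ιMulti_comp_eq_sign_smul_basis {R M I : Type*} [CommRing R]
    [AddCommGroup M] [Module R M] [LinearOrder I] (b : Module.Basis I R M) {n : ℕ}
    {α : Fin n → I} (hα : Injective α) :
    ∃ u : ℤˣ, ιMulti R n (b ∘ α) = u • b.ExteriorAlgebra (univ.image α) := by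
  set S := univ.image α
  have hS : #S = n := by simp [S, card_image_of_injective _ hα]
  -- `α` is the increasing enumeration of `S` composed with the permutation `σ` sorting it.
  let τ (i : Fin n) : Fin n := (S.orderIsoOfFin hS).symm ⟨α i, mem_image_of_mem α (mem_univ i)⟩
  have hτ : Injective τ := fun i j h => hα (by simpa [τ] using h)
  let σ := Equiv.ofBijective τ (Finite.injective_iff_bijective.1 hτ)
  have hα' : α = S.orderEmbOfFin hS ∘ σ := by
    funext i
    simp [σ, τ, ← coe_orderIsoOfFin_apply]
  refine ⟨Equiv.Perm.sign σ, ?_⟩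
  rw [basis_apply_ofCard b hS, hα', ← Function.comp_assoc, AlternatingMap.map_perm]
  rfl

theorem ExteriorAlgebra.linearIndependent_ιMulti_basis_comp {R M I ι : Type*} [CommRing R]
    [AddCommGroup M] [Module R M] [LinearOrder I] (b : Module.Basis I R M) {n : ℕ}
    (f : ι → Fin n → I) (hf : ∀ i, Injective (f i))
    (himage : Injective fun i => univ.image (f i)) :
    LinearIndependent R fun i => ιMulti R n (b ∘ f i) := by
  choose u hu using fun i => exists_ιMulti_comp_eq_sign_smul_basis b (hf i)
  convert (b.ExteriorAlgebra.linearIndependent.comp _ himage).group_smul u with i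
  exact hu i

section wedgeIndex

variable (r : ℕ)

def wedgeIndex (J : Finset ℕ) (j : ℕ) : ℕ := if j ∈ J then j + r + 1 else j

variable {r}

theorem wedgeIndex_lt (J : Finset ℕ) {j : ℕ} (hj : j < r + 1) :
    wedgeIndex r J j < 2 * r + 2 := by
  unfold wedgeIndex; split_ifs <;> omega

theorem wedgeIndex_inj (J : Finset ℕ) {i j : ℕ} (hi : i < r + 1) (hj : j < r + 1)
    (h : wedgeIndex r J i = wedgeIndex r J j) : i = j := by
  unfold wedgeIndex at h; split_ifs at h <;> omega

theorem mem_iff_exists_wedgeIndex_eq (J : Finset ℕ) {j : ℕ} (hj : j < r + 1) :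
    j ∈ J ↔ ∃ i < r + 1, wedgeIndex r J i = j + r + 1 := by
  refine ⟨fun h => ⟨j, hj, if_pos h⟩, fun ⟨i, hi, h⟩ => ?_⟩
  unfold wedgeIndex at h
  split_ifs at h
  · rwa [show j = i by omega]
  · omega

theorem linearIndepOn_prod_ι_wedgeIndex {R M : Type*} [CommRing R] [AddCommGroup M]
    [Module R M] {N : ℕ} (hN : 2 * r + 2 ≤ N) (b : Module.Basis (Fin N) R M) {e : ℕ → M}
    (he : ∀ i (hi : i < N), e i = b ⟨i, hi⟩) :
    LinearIndepOn R
      (fun J => ((List.range (r + 1)).map fun j => ι R (e (wedgeIndex r J j))).prod)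
      (range (r + 1)).powerset := by
  let f (J : Finset ℕ) (j : Fin (r + 1)) : Fin N :=
    ⟨wedgeIndex r J j, (wedgeIndex_lt J j.2).trans_le hN⟩
  have hf (J : Finset ℕ) : Injective (f J) := fun i j h =>
    Fin.ext (wedgeIndex_inj J i.2 j.2 (Fin.ext_iff.1 h))
  have hmem (J : Finset ℕ) {j : ℕ} (hj : j < r + 1) :
      j ∈ J ↔ (⟨j + r + 1, by omega⟩ : Fin N) ∈ univ.image (f J) := by
    rw [mem_iff_exists_wedgeIndex_eq J hj]
    simp [f, Fin.ext_iff, Fin.exists_iff]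
  have himage : Injective fun J : ((range (r + 1)).powerset : Set (Finset ℕ)) =>
      univ.image (f J) := by
    rintro ⟨J, hJ⟩ ⟨J', hJ'⟩ (h : univ.image (f J) = univ.image (f J'))
    refine Subtype.ext (Finset.ext fun j => ?_)
    by_cases hj : j < r + 1
    · rw [hmem J hj, hmem J' hj, h]
    · exact iff_of_false (fun h => hj (mem_range.1 (mem_powerset.1 hJ h)))
        (fun h => hj (mem_range.1 (mem_powerset.1 hJ' h)))
  have hwedge (J : Finset ℕ) :
      ((List.range (r + 1)).map fun j => ι R (e (wedgeIndex r J j))).prod =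
        ιMulti R (r + 1) (b ∘ f J) := by
    rw [list_prod_map_range_ι_eq_ιMulti]
    exact congrArg _ (funext fun j => he _ _)
  simp_rw [LinearIndepOn, hwedge]
  exact linearIndependent_ιMulti_basis_comp b _ (fun J => hf J) himage

end wedgeIndex

/-- In `𝔾(r,n)` with `n ≥ 2r+1`, the curve
`γ([t:s]) = [(se₀ + te_{r+1}) ∧ ⋯ ∧ (se_r + te_{2r+1})]` joins
`[e₀ ∧ ⋯ ∧ e_r]` (at `t = 0`) and `[e_{r+1} ∧ ⋯ ∧ e_{2r+1}]` (at `s = 0`);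
expanding the wedge product, its coordinate on the basis vector indexed by a
subset `J ⊆ {0,…,r}` (replacing `e_j` by `e_{j+r+1}` for `j ∈ J`) is the
monomial `s^{r+1-|J|} t^{|J|}`; all degrees `0,…,r+1` in `t` occur; and the
image spans a linear space of (affine) dimension `r+2` — i.e. the image is a
rational normal curve of degree `r+1` in a `ℙ^{r+1}`. -/
theorem grassmannian_rational_normal_curve (r n : ℕ) (hn : 2 * r + 1 ≤ n) :
    let M : Type := Fin (n + 1) → ℂ
    let e : ℕ → M := fun i => if h : i < n + 1 then Pi.single (⟨i, h⟩ : Fin (n + 1)) 1 else 0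
    let γ : ℂ → ℂ → ExteriorAlgebra ℂ M := fun t s =>
      ((List.range (r + 1)).map
        (fun j => ExteriorAlgebra.ι ℂ (s • e j + t • e (j + r + 1)))).prod
    γ 0 1 = ((List.range (r + 1)).map (fun j => ExteriorAlgebra.ι ℂ (e j))).prod ∧
    γ 1 0 = ((List.range (r + 1)).map (fun j => ExteriorAlgebra.ι ℂ (e (j + r + 1)))).prod ∧
    (∀ t s : ℂ, γ t s = ∑ J ∈ (Finset.range (r + 1)).powerset,
      (s ^ (r + 1 - J.card) * t ^ J.card) •
        ((List.range (r + 1)).map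
          (fun j => ExteriorAlgebra.ι ℂ (e (if j ∈ J then j + r + 1 else j)))).prod) ∧
    (∀ j : ℕ, j ≤ r + 1 → ∃ J ∈ (Finset.range (r + 1)).powerset, J.card = j) ∧
    Module.finrank ℂ ↥(Submodule.span ℂ
      {x : ExteriorAlgebra ℂ M | ∃ t s : ℂ, x = γ t s}) = r + 2 := by
  intro M e γ
  let w (J : Finset ℕ) : ExteriorAlgebra ℂ M :=
    ((List.range (r + 1)).map fun j => ι ℂ (e (wedgeIndex r J j))).prod
  have hexpand (t s : ℂ) :
      γ t s = ∑ J ∈ (range (r + 1)).powerset, (s ^ (r + 1 - #J) * t ^ #J) • w J := by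
    simp only [γ, map_add, map_smul, List.prod_map_range_smul_add_smul, w, wedgeIndex, apply_ite]
  have hrange_mem {j : ℕ} (hj : j ≤ r + 1) : range j ∈ (range (r + 1)).powerset :=
    mem_powerset.2 (range_subset_range.2 hj)
  have hdeg {J : Finset ℕ} (hJ : J ∈ (range (r + 1)).powerset) :
      (Fin.ofNat (r + 2) #J : ℕ) = #J := by
    rw [Fin.val_ofNat, Nat.mod_eq_of_lt]
    exact Nat.lt_succ_of_le ((card_le_card (mem_powerset.1 hJ)).trans_eq (card_range _))
  let W (k : Fin (r + 2)) : ExteriorAlgebra ℂ M :=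
    ∑ J ∈ (range (r + 1)).powerset with Fin.ofNat (r + 2) #J = k, w J
  have hW : LinearIndependent ℂ W :=
    (linearIndepOn_prod_ι_wedgeIndex (by omega) (Pi.basisFun ℂ (Fin (n + 1)))
      fun i hi => by rw [Pi.basisFun_apply]; exact dif_pos hi).linearIndependent_sum_fiberwise
      (fun J => Fin.ofNat (r + 2) #J)
      fun k => ⟨range k, hrange_mem k.is_le, by rw [card_range, Fin.ofNat_val_eq_self]⟩
  have hγ : γ = fun t s => ∑ k : Fin (r + 2), (s ^ (r + 1 - (k : ℕ)) * t ^ (k : ℕ)) • W k := by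
    funext t s
    rw [hexpand, sum_smul_sum_fiberwise]
    exact sum_congr rfl fun J hJ => by rw [hdeg hJ]
  refine ⟨by simp [γ], by simp [γ], hexpand, fun j hj => ⟨range j, hrange_mem hj, card_range j⟩, ?_⟩
  rw [hγ]
  exact finrank_span_moment_curve hW
end
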